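/- Let c>0, Δ>0, D={(x,y): x²+y²<c²Δ²}, u(x,y)=c²Δ²−x²−y², and for μ>0 let p_μ(x,y) = (μ/(2πc)) e^{−μΔ+(μ/c)√(u(x,y))}/√(u(x,y)), and I(μ) = (1/μ²)(1 − e^{−μΔ}(1+μ²Δ²)). Then for all 0<λ≤λ′, ∬_D (√(p_{λ′}(x,y)) − √(p_λ(x,y)))² dx dy ≤ (λ′−λ)² · (1/4) ∫₀¹ I(λ + s(λ′−λ)) ds. -/

import Mathlib

/-!
With the score `ℓ_μ = ∂_μ log p_μ`, the map `μ ↦ √p_μ(q)` has derivative `√p_μ(q) ℓ_μ(q) / 2`.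
Along the segment `μ = λ + s (λ' - λ)`, the fundamental theorem of calculus and Cauchy–Schwarz
bound `(√p_λ'(q) - √p_λ(q))²` by `(λ' - λ)²/4 ∫₀¹ p_μ(q) ℓ_μ(q)² ds` pointwise on `D`.
Integrating over `D` and exchanging the integrals (Tonelli) reduces the claim to the Fisher
identity `∫_D p_μ ℓ_μ² = I(μ)`, which in polar coordinates is a one-dimensional integral with an
explicit primitive.
-/

open MeasureTheory Real

/-- The absolutely continuous density of a planar random flight at time step `Δ`,
speed `c` and Poisson rate `μ`, evaluated at the point `q` of the open disc of
radius `cΔ`. -/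
noncomputable def prfDensity (c Δ μ : ℝ) (q : ℝ × ℝ) : ℝ :=
  μ / (2 * π * c) *
    Real.exp (-μ * Δ + μ / c * Real.sqrt (c ^ 2 * Δ ^ 2 - q.1 ^ 2 - q.2 ^ 2)) /
      Real.sqrt (c ^ 2 * Δ ^ 2 - q.1 ^ 2 - q.2 ^ 2)

/-- Single-observation Fisher information of the planar random flight experiment. -/
noncomputable def prfFisher (Δ μ : ℝ) : ℝ :=
  1 / μ ^ 2 * (1 - Real.exp (-μ * Δ) * (1 + μ ^ 2 * Δ ^ 2))

open Set Function

theorem add_mul_sub_pos {a b s : ℝ} (ha : 0 < a) (hab : a ≤ b) (hs : 0 ≤ s) :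
    0 < a + s * (b - a) :=
  add_pos_of_pos_of_nonneg ha (mul_nonneg hs (sub_nonneg.2 hab))

theorem sq_sub_le_mul_integral_sq {f f' : ℝ → ℝ} {a b : ℝ} (hab : a ≤ b)
    (hf : ∀ x ∈ Icc a b, HasDerivAt f (f' x) x) (hf' : ContinuousOn f' (Icc a b)) :
    (f b - f a) ^ 2 ≤ (b - a) * ∫ x in a..b, f' x ^ 2 := by
  rcases hab.eq_or_lt with rfl | hlt
  · simp
  have hf'_int : IntegrableOn f' (Ioc a b) :=
    hf'.integrableOn_Icc.mono_set Ioc_subset_Icc_self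
  have hf'_sq_int : IntegrableOn (fun x => f' x ^ 2) (Ioc a b) :=
    (hf'.pow 2).integrableOn_Icc.mono_set Ioc_subset_Icc_self
  have hftc : f b - f a = ∫ x in a..b, f' x :=
    (intervalIntegral.integral_eq_sub_of_hasDerivAt (by rwa [uIcc_of_le hab])
      (hf'.intervalIntegrable_of_Icc hab)).symm
  have hjensen := (even_two.convexOn_pow (𝕜 := ℝ)).map_set_average_le
    (continuous_pow 2).continuousOn isClosed_univ (by simpa using hlt) (by simp) (by simp)
    hf'_int hf'_sq_int
  have hlen : volume.real (Ioc a b) = b - a := by simp [hab]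
  rw [setAverage_eq, setAverage_eq, hlen, ← intervalIntegral.integral_of_le hab,
    ← intervalIntegral.integral_of_le hab, ← hftc, smul_eq_mul, smul_eq_mul, mul_pow] at hjensen
  have hba : 0 < b - a := sub_pos.2 hlt
  rw [inv_pow, ← div_eq_inv_mul, ← div_eq_inv_mul, div_le_div_iff₀ (by positivity) hba] at hjensen
  nlinarith

theorem integral_le_integral_integral_of_le {α β : Type*} [MeasurableSpace α] [MeasurableSpace β]
    {μ : Measure α} {ν : Measure β} [SFinite μ] [SFinite ν] {f : α → ℝ} {F : α → β → ℝ}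
    (hf : 0 ≤ᵐ[μ] f) (hF : ∀ᵐ y ∂ν, 0 ≤ᵐ[μ] fun x => F x y)
    (hF_meas : AEStronglyMeasurable (uncurry F) (μ.prod ν))
    (hF_int : ∀ᵐ y ∂ν, Integrable (F · y) μ) (hG : Integrable (fun y => ∫ x, F x y ∂μ) ν)
    (hle : ∀ᵐ x ∂μ, f x ≤ ∫ y, F x y ∂ν) :
    ∫ x, f x ∂μ ≤ ∫ y, ∫ x, F x y ∂μ ∂ν := by
  have hF_prod : Integrable (uncurry F) (μ.prod ν) := by
    refine (integrable_prod_iff' hF_meas).2 ⟨hF_int, hG.congr ?_⟩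
    filter_upwards [hF] with y hy
    exact integral_congr_ae (hy.mono fun x hx => (Real.norm_of_nonneg hx).symm)
  calc ∫ x, f x ∂μ ≤ ∫ x, ∫ y, F x y ∂ν ∂μ :=
        integral_mono_of_nonneg hf hF_prod.integral_prod_left hle
    _ = ∫ y, ∫ x, F x y ∂μ ∂ν := integral_integral_swap hF_prod

theorem integrable_of_integrableOn_polarCoord_symm {E : Type*} [NormedAddCommGroup E]
    [NormedSpace ℝ E] {f : ℝ × ℝ → E}
    (hf : IntegrableOn (fun p : ℝ × ℝ => p.1 • f (polarCoord.symm p)) polarCoord.target) :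
    Integrable f := by
  rw [← integrableOn_univ, IntegrableOn, ← Measure.restrict_congr_set polarCoord_source_ae_eq_univ,
    ← IntegrableOn, ← polarCoord.symm_image_target_eq_source,
    integrableOn_image_iff_integrableOn_abs_det_fderiv_smul volume
      polarCoord.open_target.measurableSet
      (fun p _ => (hasFDerivAt_polarCoord_symm p).hasFDerivWithinAt) polarCoord.symm.injOn f]
  refine hf.congr_fun (fun p hp => ?_) polarCoord.open_target.measurableSet
  rw [det_fderivPolarCoordSymm, abs_of_pos hp.1]

theorem polarCoord_symm_smul_indicator_disc {f : ℝ → ℝ} {R : ℝ} (hR : 0 ≤ R) {p : ℝ × ℝ}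
    (hp : p ∈ polarCoord.target) :
    p.1 • {q : ℝ × ℝ | q.1 ^ 2 + q.2 ^ 2 < R ^ 2}.indicator
        (fun q => f (√(q.1 ^ 2 + q.2 ^ 2))) (polarCoord.symm p) =
      (Ioo 0 R).indicator (fun r => r * f r) p.1 := by
  obtain ⟨r, θ⟩ := p
  have hr : 0 < r := hp.1
  have hnorm : (r * cos θ) ^ 2 + (r * sin θ) ^ 2 = r ^ 2 := by
    rw [mul_pow, mul_pow, ← mul_add, cos_sq_add_sin_sq, mul_one]
  have hmem : r ^ 2 < R ^ 2 ↔ r ∈ Ioo 0 R := by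
    rw [mem_Ioo, pow_lt_pow_iff_left₀ hr.le hR two_ne_zero]
    exact ⟨fun h => ⟨hr, h⟩, And.right⟩
  simp only [polarCoord_symm_apply, indicator, mem_ofPred_eq, hnorm, hmem, sqrt_sq hr.le,
    smul_eq_mul]
  split_ifs <;> simp

theorem integral_disc_comp_sqrt {f : ℝ → ℝ} {R : ℝ} (hR : 0 ≤ R) :
    ∫ q in {q : ℝ × ℝ | q.1 ^ 2 + q.2 ^ 2 < R ^ 2}, f (√(q.1 ^ 2 + q.2 ^ 2)) =
      2 * π * ∫ r in Ioo 0 R, r * f r := by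
  have hD : MeasurableSet {q : ℝ × ℝ | q.1 ^ 2 + q.2 ^ 2 < R ^ 2} :=
    measurableSet_lt (by fun_prop) measurable_const
  rw [← integral_indicator hD, ← integral_comp_polarCoord_symm,
    setIntegral_congr_fun polarCoord.open_target.measurableSet
      (fun p hp => (polarCoord_symm_smul_indicator_disc hR hp).trans (mul_one _).symm),
    polarCoord_target, Measure.volume_eq_prod, ← Measure.prod_restrict,
    integral_prod_mul (fun r => (Ioo 0 R).indicator (fun r => r * f r) r) (fun _ => (1 : ℝ)),
    integral_indicator measurableSet_Ioo, Measure.restrict_restrict measurableSet_Ioo,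
    inter_eq_self_of_subset_left Ioo_subset_Ioi_self]
  simp only [integral_const, smul_eq_mul, mul_one, measureReal_restrict_apply_univ]
  rw [Real.volume_real_Ioo_of_le (by linarith [pi_pos])]
  ring

theorem integrableOn_disc_comp_sqrt {f : ℝ → ℝ} {R : ℝ} (hR : 0 ≤ R)
    (hf : IntegrableOn (fun r => r * f r) (Ioo 0 R)) :
    IntegrableOn (fun q : ℝ × ℝ => f (√(q.1 ^ 2 + q.2 ^ 2)))
      {q : ℝ × ℝ | q.1 ^ 2 + q.2 ^ 2 < R ^ 2} := by
  have hD : MeasurableSet {q : ℝ × ℝ | q.1 ^ 2 + q.2 ^ 2 < R ^ 2} :=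
    measurableSet_lt (by fun_prop) measurable_const
  rw [← integrable_indicator_iff hD]
  refine integrable_of_integrableOn_polarCoord_symm (IntegrableOn.congr_fun ?_
    (fun p hp => ((polarCoord_symm_smul_indicator_disc hR hp).trans (mul_one _).symm).symm)
    polarCoord.open_target.measurableSet)
  rw [IntegrableOn, polarCoord_target, Measure.volume_eq_prod, ← Measure.prod_restrict]
  refine Integrable.mul_prod ?_ (integrable_const (1 : ℝ))
  rwa [integrable_indicator_iff measurableSet_Ioo, IntegrableOn,
    Measure.restrict_restrict measurableSet_Ioo, inter_eq_self_of_subset_left Ioo_subset_Ioi_self]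

noncomputable def prfScore (c Δ μ : ℝ) (q : ℝ × ℝ) : ℝ :=
  1 / μ + √(c ^ 2 * Δ ^ 2 - q.1 ^ 2 - q.2 ^ 2) / c - Δ

section

variable {c Δ μ : ℝ}

theorem prfDensity_nonneg (hc : 0 ≤ c) (hμ : 0 ≤ μ) (q : ℝ × ℝ) : 0 ≤ prfDensity c Δ μ q := by
  unfold prfDensity
  positivity

theorem prfDensity_pos (hc : 0 < c) (hμ : 0 < μ) {q : ℝ × ℝ}
    (hq : q.1 ^ 2 + q.2 ^ 2 < c ^ 2 * Δ ^ 2) : 0 < prfDensity c Δ μ q := by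
  have : 0 < √(c ^ 2 * Δ ^ 2 - q.1 ^ 2 - q.2 ^ 2) := sqrt_pos.2 (by linarith)
  unfold prfDensity
  positivity

theorem hasDerivAt_prfDensity (hμ : μ ≠ 0) (q : ℝ × ℝ) :
    HasDerivAt (fun μ => prfDensity c Δ μ q) (prfDensity c Δ μ q * prfScore c Δ μ q) μ := by
  have hexp := (((hasDerivAt_id μ).neg.mul_const Δ).add
    (((hasDerivAt_id μ).div_const c).mul_const (√(c ^ 2 * Δ ^ 2 - q.1 ^ 2 - q.2 ^ 2)))).exp
  refine ((((hasDerivAt_id μ).div_const (2 * π * c)).mul hexp).div_const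
    (√(c ^ 2 * Δ ^ 2 - q.1 ^ 2 - q.2 ^ 2))).congr_deriv ?_
  simp only [prfDensity, prfScore, id, Pi.add_apply, Pi.neg_apply]
  field_simp
  ring

theorem hasDerivAt_sqrt_prfDensity (hc : 0 < c) (hμ : 0 < μ) {q : ℝ × ℝ}
    (hq : q.1 ^ 2 + q.2 ^ 2 < c ^ 2 * Δ ^ 2) :
    HasDerivAt (fun μ => √(prfDensity c Δ μ q))
      (√(prfDensity c Δ μ q) * prfScore c Δ μ q / 2) μ := by
  have hp := prfDensity_pos hc hμ hq
  convert (hasDerivAt_prfDensity hμ.ne' q).sqrt hp.ne' using 1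
  nth_rw 2 [← mul_self_sqrt hp.le]
  field_simp

-- Substituting `w = √(c²Δ² - r²)` turns `r dr` into `-w dw` and the integrand into an
-- exponential times a quadratic polynomial in `w`.
noncomputable def prfFisherPrimitive (c Δ μ r : ℝ) : ℝ :=
  -(exp (μ * (√(c ^ 2 * Δ ^ 2 - r ^ 2) / c - Δ)) *
      ((Δ - √(c ^ 2 * Δ ^ 2 - r ^ 2) / c) ^ 2 + 1 / μ ^ 2)) / (2 * π)

theorem hasDerivAt_prfFisherPrimitive (hc : 0 < c) (hμ : μ ≠ 0) {r : ℝ}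
    (hr : r ^ 2 < c ^ 2 * Δ ^ 2) :
    HasDerivAt (prfFisherPrimitive c Δ μ)
      (r * (prfDensity c Δ μ (r, 0) * prfScore c Δ μ (r, 0) ^ 2)) r := by
  have hw_pos : 0 < √(c ^ 2 * Δ ^ 2 - r ^ 2) := sqrt_pos.2 (by linarith)
  have hw : HasDerivAt (fun r => √(c ^ 2 * Δ ^ 2 - r ^ 2))
      (-(2 * r) / (2 * √(c ^ 2 * Δ ^ 2 - r ^ 2))) r := by
    simpa using ((hasDerivAt_pow 2 r).const_sub (c ^ 2 * Δ ^ 2)).sqrt (by linarith)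
  have hexp := (((hw.div_const c).sub_const Δ).const_mul μ).exp
  have hsq := (((hw.div_const c).const_sub Δ).pow 2).add_const (1 / μ ^ 2)
  refine ((hexp.mul hsq).neg.div_const (2 * π)).congr_deriv ?_
  simp only [prfDensity, prfScore, Pi.pow_apply, ne_eq, OfNat.ofNat_ne_zero, not_false_eq_true,
    zero_pow, sub_zero, Nat.reduceSub, pow_one, Nat.cast_ofNat]
  have hc0 : c ≠ 0 := hc.ne'
  field_simp
  ring_nf

theorem integrableOn_and_integral_radial_prfFisher (hc : 0 < c) (hΔ : 0 < Δ) (hμ : 0 < μ) :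
    IntegrableOn (fun r => r * (prfDensity c Δ μ (r, 0) * prfScore c Δ μ (r, 0) ^ 2))
        (Ioo 0 (c * Δ)) ∧
      ∫ r in Ioo 0 (c * Δ), r * (prfDensity c Δ μ (r, 0) * prfScore c Δ μ (r, 0) ^ 2) =
        prfFisher Δ μ / (2 * π) := by
  have hcΔ : 0 < c * Δ := mul_pos hc hΔ
  have hderiv (r : ℝ) (hr : r ∈ Ioo 0 (c * Δ)) :
      HasDerivAt (prfFisherPrimitive c Δ μ)
        (r * (prfDensity c Δ μ (r, 0) * prfScore c Δ μ (r, 0) ^ 2)) r :=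
    hasDerivAt_prfFisherPrimitive hc hμ.ne' (by nlinarith [hr.1, hr.2])
  have hcont : ContinuousOn (prfFisherPrimitive c Δ μ) (Icc 0 (c * Δ)) := by
    unfold prfFisherPrimitive
    fun_prop
  have hint := intervalIntegral.integrableOn_deriv_of_nonneg hcont hderiv
    (fun r hr => mul_nonneg hr.1.le (mul_nonneg (prfDensity_nonneg hc.le hμ.le _) (sq_nonneg _)))
  refine ⟨hint.mono_set Ioo_subset_Ioc_self, ?_⟩
  rw [← integral_Ioc_eq_integral_Ioo, ← intervalIntegral.integral_of_le hcΔ.le,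
    intervalIntegral.integral_eq_sub_of_hasDerivAt_of_le hcΔ.le hcont hderiv
      ((intervalIntegrable_iff_integrableOn_Ioc_of_le hcΔ.le).2 hint)]
  have hw_end : √(c ^ 2 * Δ ^ 2 - (c * Δ) ^ 2) = 0 := by rw [← mul_pow, sub_self, sqrt_zero]
  have hw_start : √(c ^ 2 * Δ ^ 2 - 0 ^ 2) = c * Δ := by
    rw [zero_pow two_ne_zero, sub_zero, ← mul_pow, sqrt_sq hcΔ.le]
  simp only [prfFisherPrimitive, prfFisher, hw_end, hw_start, mul_div_cancel_left₀ Δ hc.ne',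
    sub_self, mul_zero, exp_zero, zero_div, zero_sub]
  field_simp
  ring

theorem prfDensity_mul_prfScore_sq_eq_radial :
    (fun q => prfDensity c Δ μ q * prfScore c Δ μ q ^ 2) = fun q : ℝ × ℝ =>
      prfDensity c Δ μ (√(q.1 ^ 2 + q.2 ^ 2), 0) * prfScore c Δ μ (√(q.1 ^ 2 + q.2 ^ 2), 0) ^ 2 :=
  funext fun q => by
    have hu : c ^ 2 * Δ ^ 2 - √(q.1 ^ 2 + q.2 ^ 2) ^ 2 - 0 ^ 2 =
        c ^ 2 * Δ ^ 2 - q.1 ^ 2 - q.2 ^ 2 := by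
      rw [sq_sqrt (by positivity)]
      ring
    simp only [prfDensity, prfScore, hu]

theorem integrableOn_prfDensity_mul_prfScore_sq (hc : 0 < c) (hΔ : 0 < Δ) (hμ : 0 < μ) :
    IntegrableOn (fun q => prfDensity c Δ μ q * prfScore c Δ μ q ^ 2)
      {q : ℝ × ℝ | q.1 ^ 2 + q.2 ^ 2 < c ^ 2 * Δ ^ 2} := by
  rw [prfDensity_mul_prfScore_sq_eq_radial, ← mul_pow]
  exact integrableOn_disc_comp_sqrt (mul_pos hc hΔ).le
    (integrableOn_and_integral_radial_prfFisher hc hΔ hμ).1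

theorem integral_prfDensity_mul_prfScore_sq (hc : 0 < c) (hΔ : 0 < Δ) (hμ : 0 < μ) :
    ∫ q in {q : ℝ × ℝ | q.1 ^ 2 + q.2 ^ 2 < c ^ 2 * Δ ^ 2},
      prfDensity c Δ μ q * prfScore c Δ μ q ^ 2 = prfFisher Δ μ := by
  rw [prfDensity_mul_prfScore_sq_eq_radial, ← mul_pow,
    integral_disc_comp_sqrt (f := fun r => prfDensity c Δ μ (r, 0) * prfScore c Δ μ (r, 0) ^ 2)
      (mul_pos hc hΔ).le, (integrableOn_and_integral_radial_prfFisher hc hΔ hμ).2]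
  field_simp [pi_pos.ne']

theorem continuousOn_prfFisher : ContinuousOn (prfFisher Δ) {0}ᶜ := by
  intro μ hμ
  have : μ ^ 2 ≠ 0 := pow_ne_zero 2 hμ
  show ContinuousWithinAt (fun μ => prfFisher Δ μ) _ _
  simp only [prfFisher]
  fun_prop (disch := assumption)

end

theorem sq_sqrt_prfDensity_sub_le {c Δ lam lam' : ℝ} (hc : 0 < c) (hlam : 0 < lam)
    (hle : lam ≤ lam') {q : ℝ × ℝ} (hq : q.1 ^ 2 + q.2 ^ 2 < c ^ 2 * Δ ^ 2) :
    (√(prfDensity c Δ lam' q) - √(prfDensity c Δ lam q)) ^ 2 ≤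
      (lam' - lam) ^ 2 / 4 * ∫ s in (0 : ℝ)..1, prfDensity c Δ (lam + s * (lam' - lam)) q *
        prfScore c Δ (lam + s * (lam' - lam)) q ^ 2 := by
  set d := lam' - lam with hd
  have hpos (s : ℝ) (hs : s ∈ Icc 0 1) : 0 < lam + s * d := add_mul_sub_pos hlam hle hs.1
  have hderiv (s : ℝ) (hs : s ∈ Icc 0 1) :
      HasDerivAt (fun s => √(prfDensity c Δ (lam + s * d) q))
        (d * (√(prfDensity c Δ (lam + s * d) q) * prfScore c Δ (lam + s * d) q / 2)) s := by
    have hpath : HasDerivAt (fun s => lam + s * d) d s := by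
      simpa using ((hasDerivAt_id s).mul_const d).const_add lam
    rw [mul_comm]
    exact HasDerivAt.comp (h₂ := fun μ => √(prfDensity c Δ μ q)) s
      (hasDerivAt_sqrt_prfDensity hc (hpos s hs) hq) hpath
  have hcont : ContinuousOn
      (fun s => d * (√(prfDensity c Δ (lam + s * d) q) * prfScore c Δ (lam + s * d) q / 2))
      (Icc 0 1) := by
    intro s hs
    have := (hpos s hs).ne'
    simp only [prfDensity, prfScore]
    fun_prop (disch := assumption)
  have hmain := sq_sub_le_mul_integral_sq zero_le_one hderiv hcont
  rw [one_mul, zero_mul, add_zero, hd, add_sub_cancel, sub_zero, one_mul] at hmain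
  refine hmain.trans_eq ?_
  rw [← intervalIntegral.integral_const_mul]
  refine intervalIntegral.integral_congr fun s hs => ?_
  rw [uIcc_of_le zero_le_one] at hs
  rw [mul_pow, div_pow, mul_pow, sq_sqrt (prfDensity_nonneg hc.le (hpos s hs).le q)]
  ring

theorem integral_sq_sqrt_prfDensity_sub_le_integral_integral {c Δ lam lam' : ℝ} (hc : 0 < c)
    (hΔ : 0 < Δ) (hlam : 0 < lam) (hle : lam ≤ lam') :
    ∫ q in {q : ℝ × ℝ | q.1 ^ 2 + q.2 ^ 2 < c ^ 2 * Δ ^ 2},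
        (√(prfDensity c Δ lam' q) - √(prfDensity c Δ lam q)) ^ 2 ≤
      ∫ s in Ioc 0 1, ∫ q in {q : ℝ × ℝ | q.1 ^ 2 + q.2 ^ 2 < c ^ 2 * Δ ^ 2},
        (lam' - lam) ^ 2 / 4 * (prfDensity c Δ (lam + s * (lam' - lam)) q *
          prfScore c Δ (lam + s * (lam' - lam)) q ^ 2) := by
  have hD : MeasurableSet {q : ℝ × ℝ | q.1 ^ 2 + q.2 ^ 2 < c ^ 2 * Δ ^ 2} :=
    measurableSet_lt (by fun_prop) measurable_const
  have hpos (s : ℝ) (hs : s ∈ Ioc 0 1) : 0 < lam + s * (lam' - lam) :=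
    add_mul_sub_pos hlam hle hs.1.le
  have hFisher_int : IntegrableOn
      (fun s => (lam' - lam) ^ 2 / 4 * prfFisher Δ (lam + s * (lam' - lam))) (Ioc 0 1) := by
    refine (ContinuousOn.integrableOn_Icc ?_).mono_set Ioc_subset_Icc_self
    refine continuousOn_const.mul ((continuousOn_prfFisher (Δ := Δ)).comp (by fun_prop)
      fun s hs => (add_mul_sub_pos hlam hle hs.1).ne')
  refine integral_le_integral_integral_of_le (ae_of_all _ fun _ => sq_nonneg _) ?_ ?_ ?_ ?_ ?_
  · refine (ae_restrict_iff' measurableSet_Ioc).2 (ae_of_all _ fun s hs => ae_of_all _ fun q => ?_)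
    have := prfDensity_nonneg (Δ := Δ) hc.le (hpos s hs).le q
    positivity
  · refine Measurable.aestronglyMeasurable ?_
    simp only [prfDensity, prfScore]
    fun_prop
  · exact (ae_restrict_iff' measurableSet_Ioc).2 (ae_of_all _ fun s hs =>
      (integrableOn_prfDensity_mul_prfScore_sq hc hΔ (hpos s hs)).const_mul _)
  · refine hFisher_int.congr_fun (fun s hs => ?_) measurableSet_Ioc
    rw [integral_const_mul, integral_prfDensity_mul_prfScore_sq hc hΔ (hpos s hs)]
  · refine (ae_restrict_iff' hD).2 (ae_of_all _ fun q hq => ?_)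
    rw [integral_const_mul, ← intervalIntegral.integral_of_le zero_le_one]
    exact sq_sqrt_prfDensity_sub_le hc hlam hle hq

/-- Hellinger–Lipschitz bound (Lemma 4.1(i), single experiment):
`∬_D (√p_{λ'} − √p_λ)² ≤ (λ'−λ)² (1/4) ∫₀¹ I(λ + s(λ'−λ)) ds`. -/
theorem hellinger_lipschitz_bound (c Δ lam lam' : ℝ)
    (hc : 0 < c) (hΔ : 0 < Δ) (hlam : 0 < lam) (hle : lam ≤ lam') :
    (∫ q in {q : ℝ × ℝ | q.1 ^ 2 + q.2 ^ 2 < c ^ 2 * Δ ^ 2},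
        (Real.sqrt (prfDensity c Δ lam' q) - Real.sqrt (prfDensity c Δ lam q)) ^ 2)
      ≤ (lam' - lam) ^ 2 * (1 / 4) *
          ∫ s in (0:ℝ)..1, prfFisher Δ (lam + s * (lam' - lam)) := by
  calc _ ≤ _ := integral_sq_sqrt_prfDensity_sub_le_integral_integral hc hΔ hlam hle
    _ = ∫ s in Ioc 0 1, (lam' - lam) ^ 2 / 4 * prfFisher Δ (lam + s * (lam' - lam)) := by
        refine setIntegral_congr_fun measurableSet_Ioc fun s hs => ?_
        rw [integral_const_mul,
          integral_prfDensity_mul_prfScore_sq hc hΔ (add_mul_sub_pos hlam hle hs.1.le)]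
    _ = _ := by
        rw [integral_const_mul, intervalIntegral.integral_of_le zero_le_one]
        ring
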